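/- The output of the greedy encoding satisfies the alternative characterization decimal(a_i) = q_i − 1 + ∑_{j=1}^{i−1} |{c ∈ {0,1}^{L'} : decimal(c) < decimal(a_i) and d_H(c, a_j) ≤ 2K}|, i.e., decimal(a_i) equals q_i − 1 plus the number of strings lexicographically smaller than a_i lying within Hamming distance 2K of some earlier a_j (counted with multiplicity over j). -/

import Mathlib

/-- Hamming distance between two lists (compared entrywise on the zipped part). -/
def hammingDistL (x y : List Bool) : ℕ :=
  (List.zip x y).countP (fun p => decide (p.1 ≠ p.2))

/-- `N_H(a, A)`: number (with multiplicity over `c ∈ A`) of strings `c' ∈ {0,1}^{L'}`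
having prefix `a` and `d_H(c', c) ≤ 2K`. -/
def NHl (L' K : ℕ) (a : List Bool) (A : Finset (List Bool)) : ℕ :=
  ∑ c ∈ A, (Finset.univ.filter (fun c' : Fin L' → Bool =>
    a <+: List.ofFn c' ∧ hammingDistL (List.ofFn c') c ≤ 2 * K)).card

/-- One step of the greedy bit-by-bit encoding algorithm. -/
def greedyStep (L' K : ℕ) (A : Finset (List Bool)) (s : List Bool × ℤ) : List Bool × ℤ :=
  if s.2 ≤ (2 : ℤ) ^ (L' - (s.1.length + 1)) - NHl L' K (s.1 ++ [false]) A then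
    (s.1 ++ [false], s.2)
  else
    (s.1 ++ [true], s.2 - ((2 : ℤ) ^ (L' - (s.1.length + 1)) - NHl L' K (s.1 ++ [false]) A))

/-- State of the greedy algorithm after `n` steps, starting from the empty prefix and `q`. -/
def greedy (L' K : ℕ) (A : Finset (List Bool)) (q : ℤ) (n : ℕ) : List Bool × ℤ :=
  (greedyStep L' K A)^[n] ([], q)

/-- `decimal(a)`: the value of `a` read as a binary number. -/
def decimalL (a : List Bool) : ℕ :=
  a.foldl (fun acc b => 2 * acc + (if b then 1 else 0)) 0

/-- `a_i`: the output of the greedy algorithm run with input `q_i` against the set of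
previously generated strings `a_1, …, a_{i−1}`. -/
def outs (L' K : ℕ) (q : ℕ → ℤ) : ℕ → List Bool
  | i =>
    (greedy L' K ((Finset.range i).attach.image (fun (j : {x // x ∈ Finset.range i}) =>
      have : j.1 < i := Finset.mem_range.mp j.2
      outs L' K q j.1)) (q i) L').1
  termination_by i => i

/-- The set `A_i = {a_1, …, a_{i−1}}` of previously generated strings. -/
def Aset (L' K : ℕ) (q : ℕ → ℤ) (i : ℕ) : Finset (List Bool) :=
  (Finset.range i).image (outs L' K q)

lemma decimal_foldl (l : List Bool) (a : ℕ) :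
    l.foldl (fun acc b => 2 * acc + (if b then 1 else 0)) a
      = a * 2 ^ l.length + decimalL l := by
  induction l generalizing a with
  | nil => simp [decimalL]
  | cons x xs ih =>
    simp only [List.foldl_cons, List.length_cons, decimalL] at *
    rw [ih, ih (2 * 0 + _)]
    ring

lemma decimalL_append (x y : List Bool) :
    decimalL (x ++ y) = decimalL x * 2 ^ y.length + decimalL y := by
  simp only [decimalL, List.foldl_append]
  rw [show (List.foldl (fun acc b => 2 * acc + (if b then 1 else 0)) 0 x) = decimalL x from rfl,
    decimal_foldl]
  rfl

lemma decimalL_cons (x : Bool) (xs : List Bool) :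
    decimalL (x :: xs) = (if x then 1 else 0) * 2 ^ xs.length + decimalL xs := by
  simp only [decimalL, List.foldl_cons]
  rw [show (2*0 + (if x then 1 else 0)) = (if x then 1 else 0) by ring, decimal_foldl]
  rfl

lemma decimalL_lt (l : List Bool) : decimalL l < 2 ^ l.length := by
  induction l with
  | nil => simp [decimalL]
  | cons x xs ih =>
    rw [decimalL_cons]
    simp only [List.length_cons, pow_succ]
    cases x <;> simp <;> omega

lemma decimalL_inj : ∀ (x y : List Bool), x.length = y.length → decimalL x = decimalL y → x = y := by
  intro x
  induction x with
  | nil => intro y h _; cases y <;> simp_all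
  | cons a xs ih =>
    intro y h hd
    cases y with
    | nil => simp at h
    | cons b ys =>
      simp only [List.length_cons, Nat.succ_inj] at h
      rw [decimalL_cons, decimalL_cons, h] at hd
      have h1 := decimalL_lt xs
      have h2 := decimalL_lt ys
      rw [h] at h1
      have hab : a = b := by cases a <;> cases b <;> simp_all <;> omega
      subst hab
      have : decimalL xs = decimalL ys := by cases a <;> simp at hd <;> omega
      rw [ih ys h this]

lemma prefix_iff_decimal (b l : List Bool) (hbl : b.length ≤ l.length) :
    b <+: l ↔ (decimalL b * 2 ^ (l.length - b.length) ≤ decimalL l ∧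
      decimalL l < (decimalL b + 1) * 2 ^ (l.length - b.length)) := by
  constructor
  · rintro ⟨t, rfl⟩
    rw [decimalL_append]
    have ht := decimalL_lt t
    have hlen : (b.length + t.length) - b.length = t.length := by omega
    simp only [List.length_append, hlen]
    constructor
    · omega
    · nlinarith
  · rintro ⟨h1, h2⟩
    have htd : l = l.take b.length ++ l.drop b.length := (List.take_append_drop _ _).symm
    have hlt : (l.take b.length).length = b.length := by
      rw [List.length_take]; omega
    have hld : (l.drop b.length).length = l.length - b.length := by
      rw [List.length_drop]
    have hdl : decimalL l = decimalL (l.take b.length) * 2 ^ (l.length - b.length)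
        + decimalL (l.drop b.length) := by
      conv_lhs => rw [htd]
      rw [decimalL_append, hld]
    have hdrop := decimalL_lt (l.drop b.length)
    rw [hld] at hdrop
    have heq : decimalL (l.take b.length) = decimalL b := by nlinarith
    have : l.take b.length = b := decimalL_inj _ _ (by omega) (by rw [heq])
    rw [← this]
    exact List.take_prefix _ _

lemma prefix_split (b l : List Bool) (hbl : b.length < l.length) :
    b <+: l ↔ ((b ++ [false]) <+: l ∨ (b ++ [true]) <+: l) := by
  constructor
  · rintro ⟨t, rfl⟩
    cases t with
    | nil => simp at hbl
    | cons c t' =>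
      cases c
      · left; exact ⟨t', by simp⟩
      · right; exact ⟨t', by simp⟩
  · rintro (h | h)
    · exact (List.prefix_append b [false]).trans h
    · exact (List.prefix_append b [true]).trans h

lemma prefix_not_both (b l : List Bool) :
    ¬ ((b ++ [false]) <+: l ∧ (b ++ [true]) <+: l) := by
  rintro ⟨h1, h2⟩
  have hl1 : b.length < l.length := by
    have := h1.length_le; simp at this; omega
  have e1 : l[b.length]'hl1 = false := by
    have := h1.getElem (i := b.length) (by simp)
    simpa using this.symm
  have e2 : l[b.length]'hl1 = true := by
    have := h2.getElem (i := b.length) (by simp)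
    simpa using this.symm
  rw [e1] at e2; exact Bool.false_ne_true e2

lemma NHl_split (L' K : ℕ) (a : List Bool) (A : Finset (List Bool)) (ha : a.length < L') :
    NHl L' K a A = NHl L' K (a ++ [false]) A + NHl L' K (a ++ [true]) A := by
  unfold NHl
  rw [← Finset.sum_add_distrib]
  apply Finset.sum_congr rfl
  intro c _
  have key : (Finset.univ.filter (fun c' : Fin L' → Bool =>
      a <+: List.ofFn c' ∧ hammingDistL (List.ofFn c') c ≤ 2 * K)) =
      (Finset.univ.filter (fun c' : Fin L' → Bool =>
      (a ++ [false]) <+: List.ofFn c' ∧ hammingDistL (List.ofFn c') c ≤ 2 * K)) ∪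
      (Finset.univ.filter (fun c' : Fin L' → Bool =>
      (a ++ [true]) <+: List.ofFn c' ∧ hammingDistL (List.ofFn c') c ≤ 2 * K)) := by
    ext c'
    simp only [Finset.mem_filter, Finset.mem_union, Finset.mem_univ, true_and]
    have hps := prefix_split a (List.ofFn c') (by simpa using ha)
    tauto
  rw [key, Finset.card_union_of_disjoint]
  rw [Finset.disjoint_filter]
  intro c' _ h1 h2
  exact prefix_not_both a (List.ofFn c') ⟨h1.1, h2.1⟩

lemma interval_count (L' : ℕ) (f : (Fin L' → Bool) → ℕ) (d : (Fin L' → Bool) → Prop)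
    [DecidablePred d] (X Y : ℕ) (hXY : X ≤ Y) :
    (Finset.univ.filter (fun c' => f c' < Y ∧ d c')).card =
    (Finset.univ.filter (fun c' => f c' < X ∧ d c')).card +
    (Finset.univ.filter (fun c' => (X ≤ f c' ∧ f c' < Y) ∧ d c')).card := by
  have key : (Finset.univ.filter (fun c' => f c' < Y ∧ d c')) =
      (Finset.univ.filter (fun c' => f c' < X ∧ d c')) ∪
      (Finset.univ.filter (fun c' => (X ≤ f c' ∧ f c' < Y) ∧ d c')) := by
    ext c'
    simp only [Finset.mem_filter, Finset.mem_union, Finset.mem_univ, true_and]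
    constructor
    · rintro ⟨h1, h2⟩
      by_cases h : f c' < X
      · exact Or.inl ⟨h, h2⟩
      · exact Or.inr ⟨⟨by omega, h1⟩, h2⟩
    · rintro (⟨h1, h2⟩ | ⟨⟨h1, h1'⟩, h2⟩)
      · exact ⟨by omega, h2⟩
      · exact ⟨h1', h2⟩
  rw [key, Finset.card_union_of_disjoint]
  rw [Finset.disjoint_filter]
  intro c' _ h1 h2
  omega

lemma greedy_inv (L' K : ℕ) (A : Finset (List Bool)) (q : ℤ)
    (hq1 : 0 < q) (hq2 : q ≤ 2 ^ L' - NHl L' K [] A) :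
    ∀ n, n ≤ L' →
      (greedy L' K A q n).1.length = n ∧
      0 < (greedy L' K A q n).2 ∧
      (greedy L' K A q n).2 ≤ 2 ^ (L' - n) - NHl L' K (greedy L' K A q n).1 A ∧
      (decimalL (greedy L' K A q n).1 : ℤ) * 2 ^ (L' - n) =
        q - (greedy L' K A q n).2 +
        ∑ c ∈ A, ((Finset.univ.filter (fun c' : Fin L' → Bool =>
          decimalL (List.ofFn c') < decimalL (greedy L' K A q n).1 * 2 ^ (L' - n) ∧
          hammingDistL (List.ofFn c') c ≤ 2 * K)).card : ℤ) := by
  intro n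
  induction n with
  | zero =>
    intro _
    simp only [greedy, Function.iterate_zero, id_eq]
    refine ⟨rfl, hq1, by simpa [decimalL] using hq2, ?_⟩
    have : ∀ c' : Fin L' → Bool, ¬ (decimalL (List.ofFn c') < decimalL ([] : List Bool) * 2 ^ (L' - 0)) := by
      intro c'
      simp [decimalL]
    simp [this, decimalL]
  | succ n ih =>
    intro hn1
    have hn : n ≤ L' := by omega
    obtain ⟨hlen, hr0, hr1, heq⟩ := ih hn
    set a := (greedy L' K A q n).1 with ha
    set r := (greedy L' K A q n).2 with hr
    have hit : greedy L' K A q (n + 1) = greedyStep L' K A (a, r) := by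
      rw [greedy, Function.iterate_succ_apply']; rfl
    -- decimal facts
    have hd0 : decimalL (a ++ [false]) = 2 * decimalL a := by
      rw [decimalL_append]; simp [decimalL]; ring
    have hd1 : decimalL (a ++ [true]) = 2 * decimalL a + 1 := by
      rw [decimalL_append]; simp [decimalL]; ring
    have hpow : (2 : ℕ) ^ (L' - n) = 2 ^ (L' - (n + 1)) * 2 := by
      rw [show L' - n = (L' - (n + 1)) + 1 by omega, pow_succ]
    have hpowz : (2 : ℤ) ^ (L' - n) = 2 ^ (L' - (n + 1)) * 2 := by
      rw [show L' - n = (L' - (n + 1)) + 1 by omega, pow_succ]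
    have hsplit := NHl_split L' K a A (by omega)
    rw [greedyStep] at hit
    simp only [hlen] at hit
    by_cases hc : r ≤ (2 : ℤ) ^ (L' - (n + 1)) - NHl L' K (a ++ [false]) A
    · rw [if_pos hc] at hit
      rw [hit]
      refine ⟨by simp [hlen], hr0, hc, ?_⟩
      have hth : decimalL (a ++ [false]) * 2 ^ (L' - (n + 1)) = decimalL a * 2 ^ (L' - n) := by
        rw [hd0, hpow]; ring
      simp only [hth]
      push_cast
      rw [← heq, hpowz]
      rw [show ((decimalL (a ++ [false]) : ℤ)) = 2 * decimalL a from by exact_mod_cast hd0]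
      ring
    · rw [if_neg hc] at hit
      rw [hit]
      push_neg at hc
      refine ⟨by simp [hlen], by push_cast; omega, ?_, ?_⟩
      · -- r - cap ≤ 2^(L'-(n+1)) - NHl (a++[true])
        have : (NHl L' K a A : ℤ) = NHl L' K (a ++ [false]) A + NHl L' K (a ++ [true]) A := by
          exact_mod_cast congrArg (Nat.cast : ℕ → ℤ) hsplit
        simp only
        rw [hpowz] at hr1
        omega
      · -- the decimal equation
        have hX : decimalL a * 2 ^ (L' - n) = decimalL (a ++ [false]) * 2 ^ (L' - (n + 1)) := by
          rw [hd0, hpow]; ring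
        have hY : decimalL (a ++ [true]) * 2 ^ (L' - (n + 1)) =
            decimalL a * 2 ^ (L' - n) + 2 ^ (L' - (n + 1)) := by
          rw [hd1, hpow]; ring
        have hXY : decimalL a * 2 ^ (L' - n) ≤ decimalL (a ++ [true]) * 2 ^ (L' - (n + 1)) := by
          omega
        -- per-c interval identity
        have hcard : ∀ c : List Bool,
            (Finset.univ.filter (fun c' : Fin L' → Bool =>
              decimalL (List.ofFn c') < decimalL (a ++ [true]) * 2 ^ (L' - (n + 1)) ∧
              hammingDistL (List.ofFn c') c ≤ 2 * K)).card =
            (Finset.univ.filter (fun c' : Fin L' → Bool =>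
              decimalL (List.ofFn c') < decimalL a * 2 ^ (L' - n) ∧
              hammingDistL (List.ofFn c') c ≤ 2 * K)).card +
            (Finset.univ.filter (fun c' : Fin L' → Bool =>
              (a ++ [false]) <+: List.ofFn c' ∧
              hammingDistL (List.ofFn c') c ≤ 2 * K)).card := by
          intro c
          rw [interval_count L' (fun c' => decimalL (List.ofFn c'))
            (fun c' => hammingDistL (List.ofFn c') c ≤ 2 * K) _ _ hXY]
          congr 1
          apply congrArg
          apply Finset.filter_congr
          intro c' _
          have hp := prefix_iff_decimal (a ++ [false]) (List.ofFn c')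
            (by simp [hlen]; omega)
          simp only [List.length_ofFn, List.length_append, hlen, List.length_cons,
            List.length_nil] at hp
          norm_num at hp
          have he : (decimalL (a ++ [false]) + 1) * 2 ^ (L' - (n + 1)) =
              decimalL (a ++ [true]) * 2 ^ (L' - (n + 1)) := by rw [hd0, hd1]
          rw [← hX, he] at hp
          rw [hp]
        simp only
        -- sum over A of hcard
        have hsum : ∑ c ∈ A, ((Finset.univ.filter (fun c' : Fin L' → Bool =>
              decimalL (List.ofFn c') < decimalL (a ++ [true]) * 2 ^ (L' - (n + 1)) ∧
              hammingDistL (List.ofFn c') c ≤ 2 * K)).card : ℤ) =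
            (∑ c ∈ A, ((Finset.univ.filter (fun c' : Fin L' → Bool =>
              decimalL (List.ofFn c') < decimalL a * 2 ^ (L' - n) ∧
              hammingDistL (List.ofFn c') c ≤ 2 * K)).card : ℤ)) +
            (NHl L' K (a ++ [false]) A : ℤ) := by
          rw [NHl]
          push_cast
          rw [← Finset.sum_add_distrib]
          apply Finset.sum_congr rfl
          intro c _
          exact_mod_cast congrArg (Nat.cast : ℕ → ℤ) (hcard c)
        rw [hsum]
        have hYz : ((decimalL (a ++ [true]) : ℤ)) * 2 ^ (L' - (n + 1)) =
            (decimalL a : ℤ) * 2 ^ (L' - n) + 2 ^ (L' - (n + 1)) := by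
          exact_mod_cast congrArg (Nat.cast : ℕ → ℤ) hY
        rw [hYz, heq]
        ring

lemma outs_eq (L' K : ℕ) (q : ℕ → ℤ) (i : ℕ) :
    outs L' K q i = (greedy L' K (Aset L' K q i) (q i) L').1 := by
  rw [outs, Aset]
  congr 1
  conv_rhs => rw [← Finset.attach_image_val (s := Finset.range i), Finset.image_image]
  rfl

lemma mem_zip_self {l : List Bool} {p : Bool × Bool} (hp : p ∈ l.zip l) : p.1 = p.2 := by
  induction l with
  | nil => simp at hp
  | cons x xs ih =>
    rw [List.zip_cons_cons, List.mem_cons] at hp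
    rcases hp with h | h
    · rw [h]
    · exact ih h

lemma ham_self (l : List Bool) : hammingDistL l l = 0 := by
  rw [hammingDistL, List.countP_eq_zero]
  intro p hp
  simp [mem_zip_self hp]

lemma exists_ofFn (L' : ℕ) (l : List Bool) (h : l.length = L') :
    ∃ c' : Fin L' → Bool, List.ofFn c' = l := by
  refine ⟨fun k => l[k.1]'(by omega), ?_⟩
  apply List.ext_getElem
  · simp [h]
  · intro i h1 h2
    simp

lemma key (L' K : ℕ) (q : ℕ → ℤ) (i : ℕ)
    (hq1 : 0 < q i) (hq2 : q i ≤ (2:ℤ) ^ L' - NHl L' K [] (Aset L' K q i)) :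
    (outs L' K q i).length = L' ∧ NHl L' K (outs L' K q i) (Aset L' K q i) = 0 ∧
    (decimalL (outs L' K q i) : ℤ) = q i - 1 +
      ∑ c ∈ Aset L' K q i, ((Finset.univ.filter (fun c' : Fin L' → Bool =>
        decimalL (List.ofFn c') < decimalL (outs L' K q i) ∧
        hammingDistL (List.ofFn c') c ≤ 2 * K)).card : ℤ) := by
  obtain ⟨hlen, hr0, hr1, heq⟩ := greedy_inv L' K (Aset L' K q i) (q i) hq1 hq2 L' le_rfl
  rw [← outs_eq] at hlen hr1 heq
  simp only [Nat.sub_self, pow_zero, mul_one] at hr1 heq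
  refine ⟨hlen, ?_, ?_⟩
  · omega
  · have hr : (greedy L' K (Aset L' K q i) (q i) L').2 = 1 := by omega
    rw [hr] at heq
    exact heq

/-- alternative characterization of the greedy output:
`decimal(a_i) = q_i − 1 + ∑_{j<i} |{c : decimal(c) < decimal(a_i), d_H(c, a_j) ≤ 2K}|`. -/
theorem stmt13 (L' K M : ℕ) (q : ℕ → ℤ)
    (hvalid : ∀ i < M, 0 < q i ∧ q i ≤ (2 : ℤ) ^ L' - NHl L' K [] (Aset L' K q i))
    (hdec : ∀ i, i + 1 < M → q (i + 1) < q i) :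
    ∀ i < M, (decimalL (outs L' K q i) : ℤ) = q i - 1 +
      ∑ j ∈ Finset.range i,
        ((Finset.univ.filter (fun c : Fin L' → Bool =>
          decimalL (List.ofFn c) < decimalL (outs L' K q i) ∧
          hammingDistL (List.ofFn c) (outs L' K q j) ≤ 2 * K)).card : ℤ) := by
  have hkey := fun i hi => key L' K q i (hvalid i hi).1 (hvalid i hi).2
  have hne : ∀ j i, j < i → i < M → outs L' K q i ≠ outs L' K q j := by
    intro j i hji hiM hcontra
    obtain ⟨hlen, hN, -⟩ := hkey i hiM
    obtain ⟨c', hc'⟩ := exists_ofFn L' (outs L' K q i) hlen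
    rw [NHl, Finset.sum_eq_zero_iff] at hN
    have hj : outs L' K q j ∈ Aset L' K q i :=
      Finset.mem_image_of_mem _ (Finset.mem_range.mpr hji)
    have h0 := hN (outs L' K q j) hj
    rw [Finset.card_eq_zero, Finset.filter_eq_empty_iff] at h0
    refine h0 (Finset.mem_univ c') ⟨by rw [hc'], ?_⟩
    rw [hc', ← hcontra, ham_self]
    exact Nat.zero_le _
  intro i hi
  obtain ⟨hlen, hN, heq⟩ := hkey i hi
  rw [heq]
  congr 1
  rw [Aset, Finset.sum_image]
  intro x hx y hy hxy
  rcases lt_trichotomy x y with h | h | h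
  · exact absurd hxy.symm (hne x y h (by have := Finset.mem_range.mp hy; omega))
  · exact h
  · exact absurd hxy (hne y x h (by have := Finset.mem_range.mp hx; omega))
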